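/- arXiv:math/0007173 — 2 statements merged into one kernel-verified Lean document; each statement's English description precedes it below -/
import Mathlib

section
/- Let X be a smooth vector field on M, X̄ = ∂_s × X on ℝ × M, and let π : ℝ × M → M_ℝ be the quotient map onto the orbit space of X̄ (two points are identified iff they lie on the same trajectory of X̄). For each s ∈ ℝ the composition j_s : M → M_ℝ, j_s(x) = π(s,x), is injective. -/
open scoped Manifold Topology
open Set Filter Topology

/-- A maximal local flow of a vector field `v` on a manifold `M`. -/
structure MaxLocalFlow {E : Type*} [NormedAddCommGroup E] [NormedSpace ℝ E]
    {H : Type*} [TopologicalSpace H] (I : ModelWithCorners ℝ E H)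
    (M : Type*) [TopologicalSpace M] [ChartedSpace H M]
    (v : (x : M) → TangentSpace I x) where
  domain : Set (ℝ × M)
  toFun : ℝ → M → M
  isOpen_domain : IsOpen domain
  zero_mem : ∀ x : M, ((0 : ℝ), x) ∈ domain
  map_zero : ∀ x : M, toFun 0 x = x
  continuousOn : ContinuousOn (fun p : ℝ × M => toFun p.1 p.2) domain
  segment_mem : ∀ (x : M) (t : ℝ), (t, x) ∈ domain → ∀ u ∈ Set.uIcc 0 t, (u, x) ∈ domain
  isIntegralCurveOn : ∀ x : M,
    ∀ t ∈ {t | (t, x) ∈ domain}, HasMFDerivAt 𝓘(ℝ, ℝ) I (fun t => toFun t x) t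
      ((1 : ℝ →L[ℝ] ℝ).smulRight (v (toFun t x)))
  map_add : ∀ (x : M) (s t : ℝ), (s, x) ∈ domain → (t, toFun s x) ∈ domain →
    (s + t, x) ∈ domain ∧ toFun (s + t) x = toFun t (toFun s x)
  map_neg : ∀ (x : M) (t : ℝ), (t, x) ∈ domain →
    (-t, toFun t x) ∈ domain ∧ toFun (-t) (toFun t x) = x
  maximal : ∀ (x : M) (γ : ℝ → M) (a b : ℝ), a < 0 → 0 < b → γ 0 = x →
    (∀ t ∈ Set.Ioo a b, HasMFDerivAt 𝓘(ℝ, ℝ) I γ t ((1 : ℝ →L[ℝ] ℝ).smulRight (v (γ t)))) →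
    ∀ t ∈ Set.Ioo a b, (t, x) ∈ domain ∧ toFun t x = γ t

/-- The vector field `X̄ = ∂ₛ × X` on `ℝ × M`. -/
def barField {E : Type*} [NormedAddCommGroup E] [NormedSpace ℝ E]
    {H : Type*} [TopologicalSpace H] {I : ModelWithCorners ℝ E H}
    {M : Type*} [TopologicalSpace M] [ChartedSpace H M]
    (v : (x : M) → TangentSpace I x) :
    (p : ℝ × M) → TangentSpace ((𝓘(ℝ, ℝ)).prod I) p :=
  fun p => ((1 : ℝ), v p.2)

/-- The orbit relation of a (local) flow: `p ~ q` iff the flow carries `p` to `q`. -/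
def MaxLocalFlow.rel {E : Type*} [NormedAddCommGroup E] [NormedSpace ℝ E]
    {H : Type*} [TopologicalSpace H] {I : ModelWithCorners ℝ E H}
    {M : Type*} [TopologicalSpace M] [ChartedSpace H M]
    {v : (x : M) → TangentSpace I x} (Φ : MaxLocalFlow I M v) : M → M → Prop :=
  fun p q => ∃ t : ℝ, (t, p) ∈ Φ.domain ∧ Φ.toFun t p = q

section Aux

variable {E : Type*} [NormedAddCommGroup E] [NormedSpace ℝ E]
    {H : Type*} [TopologicalSpace H] {I : ModelWithCorners ℝ E H}
    {M : Type*} [TopologicalSpace M] [ChartedSpace H M]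

/-- The flow relation is an equivalence relation. -/
theorem MaxLocalFlow.rel_equivalence {v : (x : M) → TangentSpace I x}
    (Φ : MaxLocalFlow I M v) : Equivalence Φ.rel where
  refl x := ⟨0, Φ.zero_mem x, Φ.map_zero x⟩
  symm := by
    rintro x y ⟨t, ht, rfl⟩
    exact ⟨-t, (Φ.map_neg x t ht).1, (Φ.map_neg x t ht).2⟩
  trans := by
    rintro x y z ⟨t₁, ht₁, rfl⟩ ⟨t₂, ht₂, rfl⟩
    obtain ⟨h1, h2⟩ := Φ.map_add x t₁ t₂ ht₁ ht₂
    exact ⟨t₁ + t₂, h1, h2⟩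

/-- First coordinate of the flow of `barField`. -/
theorem barField_flow_fst {v : (x : M) → TangentSpace I x}
    (Φ : MaxLocalFlow ((𝓘(ℝ, ℝ)).prod I) (ℝ × M) (barField v)) (p : ℝ × M) (t : ℝ)
    (ht : (t, p) ∈ Φ.domain) : (Φ.toFun t p).1 = p.1 + t := by
  set g : ℝ → ℝ := fun u => (Φ.toFun u p).1 - u with hg
  have hderiv : ∀ u ∈ Set.uIcc 0 t, HasDerivAt g 0 u := by
    intro u hu
    have hu' : (u, p) ∈ Φ.domain := Φ.segment_mem p t ht u hu
    have h := Φ.isIntegralCurveOn p u hu'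
    have h2 := (hasMFDerivAt_fst (I := 𝓘(ℝ, ℝ)) (I' := I) (Φ.toFun u p)).comp u h
    have h3 : HasFDerivAt (fun w => (Φ.toFun w p).1)
        ((ContinuousLinearMap.fst ℝ ℝ (TangentSpace I (Φ.toFun u p).2)).comp
          ((1 : ℝ →L[ℝ] ℝ).smulRight (barField v (Φ.toFun u p)))) u :=
      hasMFDerivAt_iff_hasFDerivAt.mp h2
    have hfst : HasDerivAt (fun w => (Φ.toFun w p).1) 1 u := by
      have := h3.hasDerivAt
      convert this using 1
      erw [ContinuousLinearMap.smulRight_apply, ContinuousLinearMap.one_apply, one_smul]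
      rfl
    have := hfst.sub (hasDerivAt_id' u)
    rw [sub_self] at this
    exact this
  have key : g t = g 0 := by
    rcases le_total 0 t with h0 | h0
    · have huIcc : Set.uIcc 0 t = Set.Icc 0 t := Set.uIcc_of_le h0
      have hcont : ContinuousOn g (Set.Icc 0 t) := fun u hu =>
        ((hderiv u (huIcc ▸ hu)).continuousAt).continuousWithinAt
      exact constant_of_has_deriv_right_zero hcont
        (fun u hu => ((hderiv u (huIcc ▸ Set.mem_Icc_of_Ico hu)).hasDerivWithinAt)) t
        (Set.right_mem_Icc.mpr h0)
    · have huIcc : Set.uIcc 0 t = Set.Icc t 0 := Set.uIcc_of_ge h0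
      have hcont : ContinuousOn g (Set.Icc t 0) := fun u hu =>
        ((hderiv u (huIcc ▸ hu)).continuousAt).continuousWithinAt
      have := constant_of_has_deriv_right_zero hcont
        (fun u hu => ((hderiv u (huIcc ▸ Set.mem_Icc_of_Ico hu)).hasDerivWithinAt)) 0
        (Set.right_mem_Icc.mpr h0)
      exact this.symm ▸ rfl
  have : (Φ.toFun t p).1 - t = (Φ.toFun 0 p).1 - 0 := key
  rw [Φ.map_zero p] at this
  linarith [this]

end Aux

/-- For each `s ∈ ℝ`, the map `j_s : M → M_ℝ = (ℝ × M)/X̄`, `j_s x = π (s, x)`,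
into the orbit space of `X̄` is injective. -/
theorem js_injective {E : Type*} [NormedAddCommGroup E] [NormedSpace ℝ E]
    {H : Type*} [TopologicalSpace H] {I : ModelWithCorners ℝ E H}
    {M : Type*} [TopologicalSpace M] [ChartedSpace H M] [IsManifold I (⊤ : ℕ∞) M]
    (v : (x : M) → TangentSpace I x)
    (Φ : MaxLocalFlow ((𝓘(ℝ, ℝ)).prod I) (ℝ × M) (barField v)) (s : ℝ) :
    Function.Injective (fun x : M => Quot.mk Φ.rel ((s, x) : ℝ × M)) := by
  intro x y h
  have hrel : Φ.rel (s, x) (s, y) :=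
    (Φ.rel_equivalence.eqvGen_iff).mp (Quot.eqvGen_exact h)
  obtain ⟨t, ht, heq⟩ := hrel
  have h1 : (Φ.toFun t (s, x)).1 = s + t := barField_flow_fst Φ (s, x) t ht
  rw [heq] at h1
  have ht0 : t = 0 := by simpa using h1.symm
  rw [ht0, Φ.map_zero] at heq
  exact (Prod.mk.injEq _ _ _ _).mp heq |>.2
end

section
/- The flow completion of (ℝ² \ {0}, ∂_x) is not Hausdorff: it is diffeomorphic to the plane ℝ² with the x-axis doubled, in which the two copies (x,0)_+ and (x,0)_− of each point on the x-axis are non-separable. -/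
open Topology Filter

/-- The punctured plane `ℝ² \ {0}`. -/
def PuncturedPlane : Type := {p : ℝ × ℝ // p ≠ (0, 0)}

instance : TopologicalSpace PuncturedPlane :=
  instTopologicalSpaceSubtype

/-- The orbit relation of `X̄ = ∂ₛ × ∂ₓ` on `ℝ × (ℝ² \ {0})`: `(s, p)` flows to
`(s', p')` iff `p' = p + (s' - s, 0)` and the horizontal segment between them avoids
the origin. -/
def PPFlowRel : (ℝ × PuncturedPlane) → (ℝ × PuncturedPlane) → Prop :=
  fun a b =>
    (∀ u ∈ Set.uIcc (0 : ℝ) (b.1 - a.1), ((a.2.val.1 + u, a.2.val.2) : ℝ × ℝ) ≠ (0, 0)) ∧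
    b.2.val = (a.2.val.1 + (b.1 - a.1), a.2.val.2)

/-- The flow completion `M_ℝ` of `(ℝ² \ {0}, ∂ₓ)`: the orbit space of `X̄` on
`ℝ × (ℝ² \ {0})` with the quotient topology. -/
def PPCompletion : Type := Quot PPFlowRel

instance : TopologicalSpace PPCompletion :=
  instTopologicalSpaceQuot

/-- The plane with the `x`-axis doubled: two copies of `ℝ²` glued by the identity
away from the `x`-axis. -/
def DoubledAxisRel : ((ℝ × ℝ) ⊕ (ℝ × ℝ)) → ((ℝ × ℝ) ⊕ (ℝ × ℝ)) → Prop :=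
  fun a b => ∃ p : ℝ × ℝ, p.2 ≠ 0 ∧ a = Sum.inl p ∧ b = Sum.inr p

/-- The plane with the `x`-axis doubled. -/
def DoubledAxisPlane : Type := Quot DoubledAxisRel

instance : TopologicalSpace DoubledAxisPlane :=
  instTopologicalSpaceQuot

/-! ### Auxiliary constructions -/

open Classical in
/-- The map `ℝ × (ℝ² \ {0}) → (ℝ²) ⊕ (ℝ²)` inducing the homeomorphism:
an orbit is recorded by its invariant `(x - s, y)`, in the left copy unless it is an
orbit on the negative `x`-axis. -/
noncomputable def toDAfun (a : ℝ × PuncturedPlane) : DoubledAxisPlane :=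
  if a.2.val.2 = 0 ∧ a.2.val.1 < 0 then
    Quot.mk DoubledAxisRel (Sum.inr (a.2.val.1 - a.1, a.2.val.2))
  else
    Quot.mk DoubledAxisRel (Sum.inl (a.2.val.1 - a.1, a.2.val.2))

lemma toDAfun_mk (s x y : ℝ) (hp : ((x, y) : ℝ × ℝ) ≠ (0, 0)) :
    toDAfun (s, ⟨(x, y), hp⟩) =
      if y = 0 ∧ x < 0 then Quot.mk DoubledAxisRel (Sum.inr (x - s, y))
      else Quot.mk DoubledAxisRel (Sum.inl (x - s, y)) := rfl

lemma toDAfun_respects : ∀ a b, PPFlowRel a b → toDAfun a = toDAfun b := by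
  rintro ⟨s, ⟨⟨x, y0⟩, hp⟩⟩ ⟨s', ⟨⟨x', y⟩, hp'⟩⟩ ⟨hseg, heq⟩
  simp only [Prod.mk.injEq] at heq
  obtain ⟨hx', rfl⟩ := heq
  have hseg' : ∀ u ∈ Set.uIcc (0 : ℝ) (s' - s), ((x + u, y) : ℝ × ℝ) ≠ (0, 0) := hseg
  have hinv : x' - s' = x - s := by rw [hx']; ring
  have hsign : (y = 0 ∧ x < 0) ↔ (y = 0 ∧ x' < 0) := by
    by_cases hy : y = 0
    · subst hy
      have hxne : x ≠ 0 := fun h => hp (by simp [h])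
      have hx'ne : x + (s' - s) ≠ 0 := by
        intro h
        exact hseg' (s' - s) Set.right_mem_uIcc (by rw [Prod.mk.injEq]; exact ⟨h, rfl⟩)
      constructor
      · rintro ⟨-, hxlt⟩
        refine ⟨rfl, ?_⟩
        by_contra hge
        have hx'pos : 0 < x + (s' - s) := by
          rw [hx'] at hge
          exact lt_of_le_of_ne (not_lt.mp hge) (Ne.symm hx'ne)
        have hu : (-x) ∈ Set.uIcc (0 : ℝ) (s' - s) :=
          Set.mem_uIcc.mpr (Or.inl ⟨by linarith, by linarith⟩)
        exact hseg' (-x) hu (by rw [Prod.mk.injEq]; exact ⟨by ring, rfl⟩)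
      · rintro ⟨-, hx'lt⟩
        refine ⟨rfl, ?_⟩
        by_contra hge
        have hxpos : 0 < x := lt_of_le_of_ne (not_lt.mp hge) (Ne.symm hxne)
        rw [hx'] at hx'lt
        have hu : (-x) ∈ Set.uIcc (0 : ℝ) (s' - s) :=
          Set.mem_uIcc.mpr (Or.inr ⟨by linarith, by linarith⟩)
        exact hseg' (-x) hu (by rw [Prod.mk.injEq]; exact ⟨by ring, rfl⟩)
    · constructor <;> (rintro ⟨h0, -⟩; exact absurd h0 hy)
  rw [toDAfun_mk, toDAfun_mk, hinv]
  by_cases hc : y = 0 ∧ x < 0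
  · rw [if_pos hc, if_pos (hsign.mp hc)]
  · rw [if_neg hc, if_neg (fun h => hc (hsign.mpr h))]

/-- The left copy inclusion into the completion, as a base-level map. -/
def toPPfun : ((ℝ × ℝ) ⊕ (ℝ × ℝ)) → PPCompletion :=
  Sum.elim
    (fun p => Quot.mk PPFlowRel (1 - p.1, ⟨(1, p.2), fun h => by
      simpa using congrArg Prod.fst h⟩))
    (fun p => Quot.mk PPFlowRel (-1 - p.1, ⟨(-1, p.2), fun h => by
      simpa using congrArg Prod.fst h⟩))

lemma toPPfun_respects : ∀ a b, DoubledAxisRel a b → toPPfun a = toPPfun b := by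
  rintro _ _ ⟨p, hp2, rfl, rfl⟩
  apply Quot.sound
  refine ⟨fun u _ h => hp2 (by simpa using congrArg Prod.snd h), ?_⟩
  simp only
  norm_num

/-- Forward map of the homeomorphism. -/
noncomputable def Fmap : PPCompletion → DoubledAxisPlane :=
  Quot.lift toDAfun toDAfun_respects

/-- Backward map of the homeomorphism. -/
def Gmap : DoubledAxisPlane → PPCompletion :=
  Quot.lift toPPfun toPPfun_respects

lemma continuous_toPPfun : Continuous toPPfun := by
  apply Continuous.sumElim <;>
  · apply continuous_quot_mk.comp
    apply Continuous.prodMk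
    · fun_prop
    · exact (Continuous.prodMk continuous_const continuous_snd).subtype_mk _

/-- the left chart map, continuous. -/
noncomputable def φL (a : ℝ × PuncturedPlane) : DoubledAxisPlane :=
  Quot.mk DoubledAxisRel (Sum.inl (a.2.val.1 - a.1, a.2.val.2))

noncomputable def φR (a : ℝ × PuncturedPlane) : DoubledAxisPlane :=
  Quot.mk DoubledAxisRel (Sum.inr (a.2.val.1 - a.1, a.2.val.2))

lemma continuous_val : Continuous (fun a : ℝ × PuncturedPlane => a.2.val) :=
  continuous_subtype_val.comp continuous_snd

lemma continuous_φL : Continuous φL := by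
  apply continuous_quot_mk.comp
  apply continuous_inl.comp
  exact (((continuous_fst.comp continuous_val).sub continuous_fst).prodMk
    (continuous_snd.comp continuous_val))

lemma continuous_φR : Continuous φR := by
  apply continuous_quot_mk.comp
  apply continuous_inr.comp
  exact (((continuous_fst.comp continuous_val).sub continuous_fst).prodMk
    (continuous_snd.comp continuous_val))

lemma toDAfun_eq_phiL {a : ℝ × PuncturedPlane} (h : ¬(a.2.val.2 = 0 ∧ a.2.val.1 < 0)) :
    toDAfun a = φL a := if_neg h

lemma toDAfun_eq_phiR {a : ℝ × PuncturedPlane} (h : a.2.val.2 = 0 ∧ a.2.val.1 < 0) :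
    toDAfun a = φR a := if_pos h

lemma continuous_toDAfun : Continuous toDAfun := by
  rw [continuous_iff_continuousAt]
  intro a
  rcases lt_trichotomy a.2.val.1 0 with hx | hx | hx
  · -- on the open set x < 0, toDAfun = φR
    have hopen : IsOpen {b : ℝ × PuncturedPlane | b.2.val.1 < 0} :=
      isOpen_lt (continuous_fst.comp continuous_val) continuous_const
    have hev : toDAfun =ᶠ[𝓝 a] φR := by
      filter_upwards [hopen.mem_nhds hx] with b hb
      by_cases hy : b.2.val.2 = 0
      · exact toDAfun_eq_phiR ⟨hy, hb⟩
      · rw [toDAfun_eq_phiL (fun h => hy h.1)]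
        exact Quot.sound ⟨((b.2.val.1 - b.1, b.2.val.2) : ℝ × ℝ), hy, rfl, rfl⟩
    exact (continuousAt_congr hev).mpr continuous_φR.continuousAt
  · -- then y ≠ 0; on the open set y ≠ 0, toDAfun = φL
    have hy : a.2.val.2 ≠ 0 := by
      intro h
      exact a.2.prop (by rw [Prod.ext_iff]; exact ⟨hx, h⟩)
    have hopen : IsOpen {b : ℝ × PuncturedPlane | b.2.val.2 ≠ 0} :=
      isOpen_ne_fun (continuous_snd.comp continuous_val) continuous_const
    have hev : toDAfun =ᶠ[𝓝 a] φL := by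
      filter_upwards [hopen.mem_nhds hy] with b hb
      exact toDAfun_eq_phiL (fun h => hb h.1)
    exact (continuousAt_congr hev).mpr continuous_φL.continuousAt
  · -- on the open set x > 0, toDAfun = φL
    have hopen : IsOpen {b : ℝ × PuncturedPlane | 0 < b.2.val.1} :=
      isOpen_lt continuous_const (continuous_fst.comp continuous_val)
    have hev : toDAfun =ᶠ[𝓝 a] φL := by
      filter_upwards [hopen.mem_nhds hx] with b hb
      exact toDAfun_eq_phiL (fun h => absurd hb (not_lt.mpr h.2.le))
    exact (continuousAt_congr hev).mpr continuous_φL.continuousAt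

lemma left_inv_FG : ∀ z : PPCompletion, Gmap (Fmap z) = z := by
  apply Quot.ind
  rintro ⟨s, ⟨⟨x, y⟩, hp⟩⟩
  show Gmap (toDAfun (s, ⟨(x, y), hp⟩)) = _
  rw [toDAfun_mk]
  by_cases hc : y = 0 ∧ x < 0
  · rw [if_pos hc]
    show Quot.mk PPFlowRel (-1 - (x - s), ⟨(-1, y), _⟩) = _
    refine (Quot.sound ?_).symm
    refine ⟨?_, by
      show ((-1 : ℝ), y) = (x + ((-1 - (x - s)) - s), y)
      rw [Prod.mk.injEq]; exact ⟨by ring, rfl⟩⟩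
    intro u hu h
    obtain ⟨hy0, hxneg⟩ := hc
    have hu' : u ∈ Set.uIcc (0 : ℝ) (-1 - x) := by
      convert hu using 2
      simp only
      ring
    have hx0 : x + u = 0 := by simpa using congrArg Prod.fst h
    rcases Set.mem_uIcc.mp hu' with ⟨h1, h2⟩ | ⟨h1, h2⟩ <;> linarith
  · rw [if_neg hc]
    show Quot.mk PPFlowRel (1 - (x - s), ⟨(1, y), _⟩) = _
    refine (Quot.sound ?_).symm
    refine ⟨?_, by
      show ((1 : ℝ), y) = (x + ((1 - (x - s)) - s), y)
      rw [Prod.mk.injEq]; exact ⟨by ring, rfl⟩⟩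
    intro u hu h
    have hy0 : y = 0 := by simpa using congrArg Prod.snd h
    have hx0 : x + u = 0 := by simpa using congrArg Prod.fst h
    have hxne : x ≠ 0 := fun h0 => hp (by simp [h0, hy0])
    have hxpos : 0 < x := by
      rcases lt_trichotomy x 0 with h' | h' | h'
      · exact absurd ⟨hy0, h'⟩ hc
      · exact absurd h' hxne
      · exact h'
    have hu' : u ∈ Set.uIcc (0 : ℝ) (1 - x) := by
      convert hu using 2
      simp only
      ring
    rcases Set.mem_uIcc.mp hu' with ⟨h1, h2⟩ | ⟨h1, h2⟩ <;> linarith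

lemma right_inv_FG : ∀ w : DoubledAxisPlane, Fmap (Gmap w) = w := by
  apply Quot.ind
  rintro (⟨c, y⟩ | ⟨c, y⟩)
  · show toDAfun (1 - c, ⟨(1, y), _⟩) = _
    rw [toDAfun_mk, if_neg (by rintro ⟨-, h⟩; norm_num at h)]
    congr 2
    ring
  · show toDAfun (-1 - c, ⟨(-1, y), _⟩) = _
    rw [toDAfun_mk]
    by_cases hy : y = 0
    · rw [if_pos ⟨hy, by norm_num⟩, hy]
      congr 2
      ring
    · rw [if_neg (fun h => hy h.1)]
      have hc : (-1 : ℝ) - (-1 - c) = c := by ring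
      rw [hc]
      exact Quot.sound ⟨(c, y), hy, rfl, rfl⟩

/-- The homeomorphism between the flow completion and the plane with doubled axis. -/
noncomputable def ppHomeo : PPCompletion ≃ₜ DoubledAxisPlane where
  toFun := Fmap
  invFun := Gmap
  left_inv := left_inv_FG
  right_inv := right_inv_FG
  continuous_toFun := continuous_quot_lift _ continuous_toDAfun
  continuous_invFun := continuous_quot_lift _ continuous_toPPfun

/-- Invariant distinguishing the two copies of an axis point. -/
noncomputable def leftAxisBool : ((ℝ × ℝ) ⊕ (ℝ × ℝ)) → Bool :=
  fun a => match a with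
  | Sum.inl p => decide (p.2 = 0)
  | Sum.inr _ => false

lemma leftAxisBool_respects : ∀ a b, DoubledAxisRel a b → leftAxisBool a = leftAxisBool b := by
  rintro _ _ ⟨p, hp2, rfl, rfl⟩
  simp [leftAxisBool, hp2]

lemma doubled_points_ne (x : ℝ) :
    Quot.mk DoubledAxisRel (Sum.inl ((x, 0) : ℝ × ℝ)) ≠
      Quot.mk DoubledAxisRel (Sum.inr ((x, 0) : ℝ × ℝ)) := by
  intro h
  have := congrArg (Quot.lift leftAxisBool leftAxisBool_respects) h
  simp [leftAxisBool] at this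

lemma doubled_points_not_disjoint (x : ℝ) :
    ¬ Disjoint (𝓝 (Quot.mk DoubledAxisRel (Sum.inl ((x, 0) : ℝ × ℝ))))
      (𝓝 (Quot.mk DoubledAxisRel (Sum.inr ((x, 0) : ℝ × ℝ)))) := by
  intro hd
  set iL : ℝ → DoubledAxisPlane := fun t => Quot.mk DoubledAxisRel (Sum.inl (x, t)) with hiL
  set iR : ℝ → DoubledAxisPlane := fun t => Quot.mk DoubledAxisRel (Sum.inr (x, t)) with hiR
  have hcL : Continuous iL :=
    continuous_quot_mk.comp (continuous_inl.comp (continuous_const.prodMk continuous_id))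
  have hcR : Continuous iR :=
    continuous_quot_mk.comp (continuous_inr.comp (continuous_const.prodMk continuous_id))
  have h1 : Tendsto iL (𝓝[≠] (0:ℝ)) (𝓝 (Quot.mk DoubledAxisRel (Sum.inl ((x, 0) : ℝ × ℝ)))) :=
    (hcL.tendsto 0).mono_left nhdsWithin_le_nhds
  have h2 : Tendsto iR (𝓝[≠] (0:ℝ)) (𝓝 (Quot.mk DoubledAxisRel (Sum.inr ((x, 0) : ℝ × ℝ)))) :=
    (hcR.tendsto 0).mono_left nhdsWithin_le_nhds
  have heq : iL =ᶠ[𝓝[≠] (0:ℝ)] iR := by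
    filter_upwards [self_mem_nhdsWithin] with t ht
    exact Quot.sound ⟨(x, t), ht, rfl, rfl⟩
  have h1' : Tendsto iR (𝓝[≠] (0:ℝ)) (𝓝 (Quot.mk DoubledAxisRel (Sum.inl ((x, 0) : ℝ × ℝ)))) :=
    h1.congr' heq
  have hbot : map iR (𝓝[≠] (0:ℝ)) ≤ ⊥ := by
    exact (le_inf h1' h2).trans hd.eq_bot.le
  have : (𝓝[≠] (0:ℝ)).NeBot := by infer_instance
  exact absurd (le_bot_iff.mp hbot) (Filter.map_neBot).ne

/-- The flow completion of `(ℝ² \ {0}, ∂ₓ)` is not Hausdorff: it is homeomorphic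
(indeed diffeomorphic) to the plane with the `x`-axis doubled, in which the two copies
`(x, 0)₊` and `(x, 0)₋` of each point of the `x`-axis are non-separable. -/
theorem ppCompletion_not_hausdorff :
    ¬ T2Space PPCompletion ∧
    Nonempty (PPCompletion ≃ₜ DoubledAxisPlane) ∧
    ∀ x : ℝ, ¬ Disjoint (𝓝 (Quot.mk DoubledAxisRel (Sum.inl ((x, 0) : ℝ × ℝ))))
      (𝓝 (Quot.mk DoubledAxisRel (Sum.inr ((x, 0) : ℝ × ℝ)))) := by
  refine ⟨?_, ⟨ppHomeo⟩, doubled_points_not_disjoint⟩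
  intro hT2
  haveI : T2Space DoubledAxisPlane := ppHomeo.symm.isEmbedding.t2Space
  haveI : T2Space (Quot DoubledAxisRel) := this
  exact doubled_points_not_disjoint 0 (disjoint_nhds_nhds.mpr (doubled_points_ne 0))
end
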